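/- If f=(h₀,h₁,h₂;q₀,q₁,q₂) is an admissible 6-tuple, then the 6-tuples ψ₁(f)=(h₁,h₂,h₀;q₁,q₂,q₀), ψ₂(f)=(h₂,h₁,h₀;q₀,q₂,q₁) and ψ₃(f)=(h₀,h₁,h₂;−q₀,−q₁,−q₂) are admissible. -/
import Mathlib


/-!
Common setup: 6-tuples, the coloured graph Γ(f), conditions (I)–(VI),
the maps ψ₁, ψ₂, ψ₃, σ, equivalences, traps, canonical/minimal/root tuples.
-/

namespace GMN

/-- A 6-tuple `(h₀,h₁,h₂;q₀,q₁,q₂)` of integers. -/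
structure Tuple where
  h0 : ℤ
  h1 : ℤ
  h2 : ℤ
  q0 : ℤ
  q1 : ℤ
  q2 : ℤ

namespace Tuple

/-- The `h`-components indexed by `ℤ₃`. -/
def h (f : Tuple) : ZMod 3 → ℤ := fun i => if i = 0 then f.h0 else if i = 1 then f.h1 else f.h2

/-- The `q`-components indexed by `ℤ₃`. -/
def q (f : Tuple) : ZMod 3 → ℤ := fun i => if i = 0 then f.q0 else if i = 1 then f.q1 else f.q2

/-- `2lᵢ = h_{i-1} + hᵢ`. -/
def twol (f : Tuple) (i : ZMod 3) : ℤ := f.h (i - 1) + f.h i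

end Tuple

/-- Condition (I): all `hᵢ` positive. -/
def CondI (f : Tuple) : Prop := ∀ i, 0 < f.h i

/-- Condition (II): all `hᵢ` of the same parity. -/
def CondII (f : Tuple) : Prop := ∀ i j, f.h i % 2 = f.h j % 2

/-- Condition (III): `0 ≤ qᵢ < 2lᵢ`. -/
def CondIII (f : Tuple) : Prop := ∀ i, 0 ≤ f.q i ∧ f.q i < f.twol i

/-- Condition (IV): all `qᵢ` of the same parity. -/
def CondIV (f : Tuple) : Prop := ∀ i j, f.q i % 2 = f.q j % 2

/-- Conditions (I)–(IV) together. -/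
def CondsI_IV (f : Tuple) : Prop := CondI f ∧ CondII f ∧ CondIII f ∧ CondIV f

/-- Condition (V): `hᵢ + qᵢ` odd. -/
def CondV (f : Tuple) : Prop := ∀ i, (f.h i + f.q i) % 2 = 1

/-- The vertex set `V(f) = ⋃ᵢ {i} × ℤ_{2lᵢ}`, with second coordinates as least
nonnegative residues. -/
def Vtx (f : Tuple) : Set (ZMod 3 × ℤ) := {p | 0 ≤ p.2 ∧ p.2 < f.twol p.1}

/-- `ι₀(i,j) = (i, j + (−1)^j)`, second coordinate mod `2lᵢ`. -/
def iota0 (f : Tuple) (p : ZMod 3 × ℤ) : ZMod 3 × ℤ :=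
  (p.1, (if p.2 % 2 = 0 then p.2 + 1 else p.2 - 1) % f.twol p.1)

/-- `ι₁(i,j) = (i, j − (−1)^j)`, second coordinate mod `2lᵢ`. -/
def iota1 (f : Tuple) (p : ZMod 3 × ℤ) : ZMod 3 × ℤ :=
  (p.1, (if p.2 % 2 = 0 then p.2 - 1 else p.2 + 1) % f.twol p.1)

/-- `ι₂(i,j) = (i+1, −j−1)` if `0 ≤ j ≤ hᵢ−1`, and `(i−1, 2lᵢ−j−1)` if `hᵢ ≤ j ≤ 2lᵢ−1`. -/
def iota2 (f : Tuple) (p : ZMod 3 × ℤ) : ZMod 3 × ℤ :=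
  if p.2 < f.h p.1 then (p.1 + 1, (-p.2 - 1) % f.twol (p.1 + 1))
  else (p.1 - 1, (f.twol p.1 - p.2 - 1) % f.twol (p.1 - 1))

/-- `ρ(i,j) = (i, j + qᵢ)`. -/
def rho (f : Tuple) (p : ZMod 3 × ℤ) : ZMod 3 × ℤ :=
  (p.1, (p.2 + f.q p.1) % f.twol p.1)

/-- `ρ⁻¹(i,j) = (i, j − qᵢ)`. -/
def rhoInv (f : Tuple) (p : ZMod 3 × ℤ) : ZMod 3 × ℤ :=
  (p.1, (p.2 - f.q p.1) % f.twol p.1)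

/-- `ι₃ = ρ ∘ ι₂ ∘ ρ⁻¹`. -/
def iota3 (f : Tuple) : ZMod 3 × ℤ → ZMod 3 × ℤ :=
  rho f ∘ iota2 f ∘ rhoInv f

/-- The four involutions of `Γ(f)`, indexed by the colour `c ∈ {0,1,2,3}`. -/
def iota (f : Tuple) : Fin 4 → ZMod 3 × ℤ → ZMod 3 × ℤ
  | 0 => iota0 f
  | 1 => iota1 f
  | 2 => iota2 f
  | 3 => iota3 f

/-- One step along an edge of `Γ(f)` whose colour lies in `S`, within `V(f)`. -/
def Step (f : Tuple) (S : Set (Fin 4)) (a b : ZMod 3 × ℤ) : Prop :=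
  a ∈ Vtx f ∧ b ∈ Vtx f ∧ ∃ c ∈ S, b = iota f c a

/-- The orbit relation on `V(f)` of the subgroup generated by the involutions with
colours in `S` (the `S`-residue relation). -/
def OrbRel (f : Tuple) (S : Set (Fin 4)) : ZMod 3 × ℤ → ZMod 3 × ℤ → Prop :=
  Relation.EqvGen (Step f S)

/-- The subgroup generated by the colours in `S` has exactly three orbits on `V(f)`. -/
def ThreeOrbits (f : Tuple) (S : Set (Fin 4)) : Prop :=
  ∃ a b c, a ∈ Vtx f ∧ b ∈ Vtx f ∧ c ∈ Vtx f ∧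
    ¬ OrbRel f S a b ∧ ¬ OrbRel f S a c ∧ ¬ OrbRel f S b c ∧
    ∀ v ∈ Vtx f, OrbRel f S a v ∨ OrbRel f S b v ∨ OrbRel f S c v

/-- Admissibility: conditions (I)–(IV), (V), and (VI) (three `{2,3}`-residues). -/
def Admissible (f : Tuple) : Prop :=
  CondsI_IV f ∧ CondV f ∧ ThreeOrbits f {2, 3}

/-- `ψ₁(h₀,h₁,h₂;q₀,q₁,q₂) = (h₁,h₂,h₀;q₁,q₂,q₀)`. -/
def psi1 (f : Tuple) : Tuple := ⟨f.h1, f.h2, f.h0, f.q1, f.q2, f.q0⟩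

/-- `ψ₂(h₀,h₁,h₂;q₀,q₁,q₂) = (h₂,h₁,h₀;q₀,q₂,q₁)`. -/
def psi2 (f : Tuple) : Tuple := ⟨f.h2, f.h1, f.h0, f.q0, f.q2, f.q1⟩

/-- `ψ₃(h₀,h₁,h₂;q₀,q₁,q₂) = (h₀,h₁,h₂;−q₀,−q₁,−q₂)`, the `q`-entries reduced to their
least nonnegative residues mod the respective `2lᵢ`. -/
def psi3 (f : Tuple) : Tuple :=
  ⟨f.h0, f.h1, f.h2,
    (-f.q0) % (f.h2 + f.h0), (-f.q1) % (f.h0 + f.h1), (-f.q2) % (f.h1 + f.h2)⟩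

/-- The 2-symmetric transformation `σ`, with the `q′`-entries reduced to their least
nonnegative residues mod the respective `2lᵢ′ = h′_{i−1} + h′ᵢ`. -/
def sigma (f : Tuple) : Tuple :=
  if f.q0 = 0 then f
  else if f.q0 < f.h0 ∧ f.q0 < f.h2 then
    ⟨f.h0 + f.h1 - f.q0, f.q0, f.h2 + f.h1 - f.q0,
      (f.h0 + f.h1 + f.h2 - 2 * f.q0) % ((f.h2 + f.h1 - f.q0) + (f.h0 + f.h1 - f.q0)),
      (f.q0 + f.q1 + f.h1) % ((f.h0 + f.h1 - f.q0) + f.q0),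
      (f.q0 + f.q2 + f.h1) % (f.q0 + (f.h2 + f.h1 - f.q0))⟩
  else if f.h0 < f.q0 ∧ f.h2 < f.q0 then
    ⟨f.q0 + f.h1 - f.h2, f.h0 + f.h2 - f.q0, f.q0 + f.h1 - f.h0,
      f.h1 % ((f.q0 + f.h1 - f.h0) + (f.q0 + f.h1 - f.h2)),
      (f.q0 + f.q1 - f.h2) % ((f.q0 + f.h1 - f.h2) + (f.h0 + f.h2 - f.q0)),
      (f.q0 + f.q2 - f.h0) % ((f.h0 + f.h2 - f.q0) + (f.q0 + f.h1 - f.h0))⟩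
  else if f.q0 < f.h2 then
    ⟨f.h1, f.h0, f.h1 + f.h2 - f.h0,
      (f.h1 + f.h2 - f.q0) % ((f.h1 + f.h2 - f.h0) + f.h1),
      f.q1 % (f.h1 + f.h0),
      (2 * f.q0 + f.q2 + f.h1 - f.h0) % (f.h0 + (f.h1 + f.h2 - f.h0))⟩
  else
    ⟨f.h1 + f.h0 - f.h2, f.h2, f.h1,
      (f.h1 + f.h0 - f.q0) % (f.h1 + (f.h1 + f.h0 - f.h2)),
      (2 * f.q0 + f.q1 + f.h1 - f.h2) % ((f.h1 + f.h0 - f.h2) + f.h2),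
      f.q2 % (f.h2 + f.h1)⟩

/-- The complexity `ν(f) = h₀ + h₁ + h₂`. -/
def nu (f : Tuple) : ℤ := f.h0 + f.h1 + f.h2

/-- `δ(f) = ν(σ(f)) − ν(f)`. -/
def delta (f : Tuple) : ℤ := nu (sigma f) - nu f

/-- One step of the action of a generator of `H` on admissible 6-tuples. -/
def HStep (a b : Tuple) : Prop :=
  Admissible a ∧ Admissible b ∧ (b = psi1 a ∨ b = psi2 a ∨ b = psi3 a)

/-- `H`-equivalence: the orbit relation of `H = ⟨ψ₁,ψ₂,ψ₃⟩` on `ℱ`. -/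
def HEquiv : Tuple → Tuple → Prop := Relation.EqvGen HStep

/-- One step of the action of a generator of `H′` on admissible 6-tuples. -/
def H'Step (a b : Tuple) : Prop :=
  Admissible a ∧ Admissible b ∧ (b = psi2 a ∨ b = psi3 a)

/-- `H′`-equivalence: the orbit relation of `H′ = ⟨ψ₂,ψ₃⟩` on `ℱ`. -/
def H'Equiv : Tuple → Tuple → Prop := Relation.EqvGen H'Step

/-- One step of the action of a generator of `G` on admissible 6-tuples. -/
def GStep (a b : Tuple) : Prop :=
  Admissible a ∧ Admissible b ∧ (b = psi1 a ∨ b = psi2 a ∨ b = psi3 a ∨ b = sigma a)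

/-- `G`-equivalence: the orbit relation of `G = ⟨ψ₁,ψ₂,ψ₃,σ⟩` on `ℱ`. -/
def GEquiv : Tuple → Tuple → Prop := Relation.EqvGen GStep

/-- Membership in the set `{0, r+1, r+2, …, s−1}`. -/
def inT (r s x : ℤ) : Prop := x = 0 ∨ (r < x ∧ x < s)

/-- A trap of type `(r,s)`: `H`-equivalent to an admissible `(r,r,s;q₀,0,q₂)` with
`q₀+k(q₀+q₂), q₂+k(q₀+q₂) ∈ {0,r+1,…,s−1} (mod r+s)` for all `k ≥ 0`. -/
def IsTrapOfType (r s : ℤ) (f : Tuple) : Prop :=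
  ∃ g : Tuple, Admissible g ∧ HEquiv f g ∧
    g.h0 = r ∧ g.h1 = r ∧ g.h2 = s ∧ g.q1 = 0 ∧
    ∀ k : ℕ, inT r s ((g.q0 + (k : ℤ) * (g.q0 + g.q2)) % (r + s)) ∧
             inT r s ((g.q2 + (k : ℤ) * (g.q0 + g.q2)) % (r + s))

/-- A trap: a trap of some type `(r,s)` with `0 < r ≤ s`. -/
def IsTrap (f : Tuple) : Prop := ∃ r s : ℤ, 0 < r ∧ r ≤ s ∧ IsTrapOfType r s f

/-- The canonical representative conditions (a)–(i) (together with admissibility). -/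
def Canonical (f : Tuple) : Prop :=
  Admissible f ∧
  (f.h0 ≤ f.h1 ∧ f.h1 ≤ f.h2) ∧
  (2 * f.q0 ≤ f.h2 + f.h0) ∧
  ((f.q0 = 0 ∨ 2 * f.q0 = f.h2 + f.h0) → 2 * f.q1 ≤ f.h0 + f.h1) ∧
  ((f.q0 = 0 ∨ 2 * f.q0 = f.h2 + f.h0) → (f.q1 = 0 ∨ 2 * f.q1 = f.h0 + f.h1) →
    2 * f.q2 ≤ f.h1 + f.h2) ∧
  (f.h0 = f.h1 → f.q0 ≤ f.q2 ∧ f.q2 ≤ (-f.q0) % (f.h2 + f.h0)) ∧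
  (f.h0 = f.h1 → (f.q2 = f.q0 ∨ f.q2 = (-f.q0) % (f.h2 + f.h0)) → f.q1 ≤ f.h1) ∧
  (f.h1 = f.h2 → f.q0 ≤ f.q1 ∧ f.q1 ≤ (-f.q0) % (f.h2 + f.h0)) ∧
  (f.h1 = f.h2 → (f.q1 = f.q0 ∨ f.q1 = (-f.q0) % (f.h2 + f.h0)) → f.q2 ≤ f.h2) ∧
  (f.h0 = f.h1 ∧ f.h1 = f.h2 → f.q1 ≤ f.q2)

/-- A canonical 6-tuple is minimal if its complexity is minimal in its `G`-orbit. -/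
def Minimal (f : Tuple) : Prop :=
  Canonical f ∧ ∀ g, GEquiv f g → nu f ≤ nu g

/-- A canonical 6-tuple is a root if every `G`-equivalent but not `H`-equivalent
6-tuple has strictly larger complexity. -/
def Root (f : Tuple) : Prop :=
  Canonical f ∧ ∀ g, GEquiv f g → ¬ HEquiv f g → nu f < nu g

/-- A colour-preserving isomorphism between `Γ(f)` and `Γ(f′)`. -/
def CPIso (f f' : Tuple) : Prop :=
  ∃ φ : ZMod 3 × ℤ → ZMod 3 × ℤ, Set.BijOn φ (Vtx f) (Vtx f') ∧
    ∀ c : Fin 4, ∀ v ∈ Vtx f, φ (iota f c v) = iota f' c (φ v)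

/-- The set of admissible 6-tuples, as a type. -/
abbrev AdmTuple := {f : Tuple // Admissible f}


section Aux
variable (f g : Tuple)

lemma h_psi1 (i : ZMod 3) : (psi1 f).h i = f.h (i + 1) := by
  fin_cases i <;> rfl

lemma q_psi1 (i : ZMod 3) : (psi1 f).q i = f.q (i + 1) := by
  fin_cases i <;> rfl

lemma twol_psi1 (i : ZMod 3) : (psi1 f).twol i = f.twol (i + 1) := by
  unfold Tuple.twol
  rw [h_psi1, h_psi1, show i - 1 + 1 = i + 1 - 1 by ring]

lemma h_psi2 (i : ZMod 3) : (psi2 f).h i = f.h (-1 - i) := by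
  fin_cases i <;> rfl

lemma q_psi2 (i : ZMod 3) : (psi2 f).q i = f.q (-i) := by
  fin_cases i <;> rfl

lemma twol_psi2 (i : ZMod 3) : (psi2 f).twol i = f.twol (-i) := by
  unfold Tuple.twol
  rw [h_psi2, h_psi2, show -1 - (i-1) = -i by ring, show -1 - i = -i - 1 by ring,
    add_comm]

lemma h_psi3 (i : ZMod 3) : (psi3 f).h i = f.h i := by
  fin_cases i <;> rfl

lemma twol_psi3 (i : ZMod 3) : (psi3 f).twol i = f.twol i := by
  unfold Tuple.twol; rw [h_psi3, h_psi3]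

lemma q_psi3 (i : ZMod 3) : (psi3 f).q i = (- f.q i) % f.twol i := by
  fin_cases i <;> rfl

end Aux
section Aux2

lemma emod_sub_emod' (a b m : ℤ) : (a - b % m) % m = (a - b) % m := by
  rw [Int.sub_emod, Int.emod_emod_of_dvd _ dvd_rfl, ← Int.sub_emod]

lemma emod_add_emod'' (a b m : ℤ) : (a + b % m) % m = (a + b) % m := by
  rw [Int.add_emod, Int.emod_emod_of_dvd _ dvd_rfl, ← Int.add_emod]

lemma emod_emod_add' (a b m : ℤ) : (a % m + b) % m = (a + b) % m := by
  rw [Int.add_emod, Int.emod_emod_of_dvd _ dvd_rfl, ← Int.add_emod]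

lemma neg_one_sub_emod (j m : ℤ) (h0 : 0 ≤ j) (h1 : j < m) :
    (-1 - j) % m = m - 1 - j := by
  rw [show -1 - j = (m - 1 - j) + m * (-1) by ring, Int.add_mul_emod_self_left]
  exact Int.emod_eq_of_lt (by omega) (by omega)

/-- Transfer of step relations along a pair of maps gives transfer of `ThreeOrbits`. -/
lemma threeOrbits_transfer {f f' : Tuple} {S : Set (Fin 4)}
    (φ ψ : ZMod 3 × ℤ → ZMod 3 × ℤ)
    (hφV : ∀ v ∈ Vtx f, φ v ∈ Vtx f')
    (hψV : ∀ v ∈ Vtx f', ψ v ∈ Vtx f)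
    (hψφ : ∀ v ∈ Vtx f, ψ (φ v) = v)
    (hφψ : ∀ v ∈ Vtx f', φ (ψ v) = v)
    (hstep : ∀ a b, Step f S a b → Step f' S (φ a) (φ b))
    (hstep' : ∀ a b, Step f' S a b → Step f S (ψ a) (ψ b)) :
    ThreeOrbits f S → ThreeOrbits f' S := by
  have orbφ : ∀ a b, OrbRel f S a b → OrbRel f' S (φ a) (φ b) := by
    intro a b h
    induction h with
    | rel a b h => exact .rel _ _ (hstep _ _ h)
    | refl a => exact .refl _
    | symm a b _ ih => exact .symm _ _ ih
    | trans a b c _ _ ih1 ih2 => exact .trans _ _ _ ih1 ih2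
  have orbψ : ∀ a b, OrbRel f' S a b → OrbRel f S (ψ a) (ψ b) := by
    intro a b h
    induction h with
    | rel a b h => exact .rel _ _ (hstep' _ _ h)
    | refl a => exact .refl _
    | symm a b _ ih => exact .symm _ _ ih
    | trans a b c _ _ ih1 ih2 => exact .trans _ _ _ ih1 ih2
  rintro ⟨a, b, c, ha, hb, hc, hab, hac, hbc, hcov⟩
  refine ⟨φ a, φ b, φ c, hφV a ha, hφV b hb, hφV c hc, ?_, ?_, ?_, ?_⟩
  · intro h; exact hab (by rw [← hψφ a ha, ← hψφ b hb]; exact orbψ _ _ h)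
  · intro h; exact hac (by rw [← hψφ a ha, ← hψφ c hc]; exact orbψ _ _ h)
  · intro h; exact hbc (by rw [← hψφ b hb, ← hψφ c hc]; exact orbψ _ _ h)
  · intro v hv
    rcases hcov (ψ v) (hψV v hv) with h | h | h
    · exact Or.inl (by have := orbφ _ _ h; rwa [hφψ v hv] at this)
    · exact Or.inr (Or.inl (by have := orbφ _ _ h; rwa [hφψ v hv] at this))
    · exact Or.inr (Or.inr (by have := orbφ _ _ h; rwa [hφψ v hv] at this))

end Aux2
section Psi1
variable (f : Tuple)

/-- The relabelling map for `ψ₁`. -/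
def sh : ZMod 3 × ℤ → ZMod 3 × ℤ := fun p => (p.1 - 1, p.2)

lemma sh_vtx {f : Tuple} {p : ZMod 3 × ℤ} (h : p ∈ Vtx f) : sh p ∈ Vtx (psi1 f) := by
  obtain ⟨h0, h1⟩ := h
  exact ⟨h0, by rw [sh, twol_psi1, show p.1 - 1 + 1 = p.1 by ring]; exact h1⟩

lemma iota2_psi1 (p : ZMod 3 × ℤ) : iota2 (psi1 f) (sh p) = sh (iota2 f p) := by
  show iota2 (psi1 f) (p.1 - 1, p.2) = sh (iota2 f p)
  unfold iota2
  rw [show ((p.1 - 1, p.2) : ZMod 3 × ℤ).2 = p.2 from rfl,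
      show ((p.1 - 1, p.2) : ZMod 3 × ℤ).1 = p.1 - 1 from rfl,
      h_psi1, twol_psi1, twol_psi1, twol_psi1,
      show p.1 - 1 + 1 = p.1 by ring, show p.1 - 1 - 1 + 1 = p.1 - 1 by ring]
  split <;> simp [sh] <;> ring

lemma rho_psi1 (p : ZMod 3 × ℤ) : rho (psi1 f) (sh p) = sh (rho f p) := by
  show (p.1 - 1, _) = (p.1 - 1, _)
  rw [Prod.mk.injEq]
  refine ⟨rfl, ?_⟩
  show (p.2 + (psi1 f).q (p.1-1)) % (psi1 f).twol (p.1-1) = (p.2 + f.q p.1) % f.twol p.1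
  rw [q_psi1, twol_psi1, show p.1 - 1 + 1 = p.1 by ring]

lemma rhoInv_psi1 (p : ZMod 3 × ℤ) : rhoInv (psi1 f) (sh p) = sh (rhoInv f p) := by
  show (p.1 - 1, _) = (p.1 - 1, _)
  rw [Prod.mk.injEq]
  refine ⟨rfl, ?_⟩
  show (p.2 - (psi1 f).q (p.1-1)) % (psi1 f).twol (p.1-1) = (p.2 - f.q p.1) % f.twol p.1
  rw [q_psi1, twol_psi1, show p.1 - 1 + 1 = p.1 by ring]

lemma iota3_psi1 (p : ZMod 3 × ℤ) : iota3 (psi1 f) (sh p) = sh (iota3 f p) := by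
  unfold iota3
  simp only [Function.comp_apply, rhoInv_psi1, iota2_psi1, rho_psi1]

lemma step_psi1 {a b : ZMod 3 × ℤ} (h : Step f {2,3} a b) :
    Step (psi1 f) {2,3} (sh a) (sh b) := by
  obtain ⟨ha, hb, c, hc, hbe⟩ := h
  refine ⟨sh_vtx ha, sh_vtx hb, c, hc, ?_⟩
  simp only [Set.mem_insert_iff, Set.mem_singleton_iff] at hc
  rcases hc with rfl | rfl
  · rw [hbe]; exact (iota2_psi1 f a).symm
  · rw [hbe]; exact (iota3_psi1 f a).symm

end Psi1
section Psi3
variable {f : Tuple}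

lemma vtx_psi3 {p : ZMod 3 × ℤ} : p ∈ Vtx (psi3 f) ↔ p ∈ Vtx f := by
  unfold Vtx; rw [Set.mem_setOf_eq, Set.mem_setOf_eq, twol_psi3]

lemma rho_mem (hm : ∀ i, 0 < f.twol i) (p : ZMod 3 × ℤ) : rho f p ∈ Vtx f :=
  ⟨Int.emod_nonneg _ (hm p.1).ne', Int.emod_lt_of_pos _ (hm p.1)⟩

lemma rhoInv_mem (hm : ∀ i, 0 < f.twol i) (p : ZMod 3 × ℤ) : rhoInv f p ∈ Vtx f :=
  ⟨Int.emod_nonneg _ (hm p.1).ne', Int.emod_lt_of_pos _ (hm p.1)⟩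

lemma iota2_mem (hm : ∀ i, 0 < f.twol i) (p : ZMod 3 × ℤ) : iota2 f p ∈ Vtx f := by
  unfold iota2; split
  · exact ⟨Int.emod_nonneg _ (hm _).ne', Int.emod_lt_of_pos _ (hm _)⟩
  · exact ⟨Int.emod_nonneg _ (hm _).ne', Int.emod_lt_of_pos _ (hm _)⟩

lemma rho_rhoInv {p : ZMod 3 × ℤ} (hp : p ∈ Vtx f) : rho f (rhoInv f p) = p := by
  obtain ⟨h0, h1⟩ := hp
  unfold rho rhoInv
  rw [Prod.mk.injEq]
  refine ⟨rfl, ?_⟩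
  show ((p.2 - f.q p.1) % f.twol p.1 + f.q p.1) % f.twol p.1 = p.2
  rw [emod_emod_add', sub_add_cancel, Int.emod_eq_of_lt h0 h1]

lemma rhoInv_rho {p : ZMod 3 × ℤ} (hp : p ∈ Vtx f) : rhoInv f (rho f p) = p := by
  obtain ⟨h0, h1⟩ := hp
  unfold rho rhoInv
  rw [Prod.mk.injEq]
  refine ⟨rfl, ?_⟩
  show ((p.2 + f.q p.1) % f.twol p.1 - f.q p.1) % f.twol p.1 = p.2
  rw [Int.sub_emod, Int.emod_emod_of_dvd _ dvd_rfl, ← Int.sub_emod,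
    add_sub_cancel_right, Int.emod_eq_of_lt h0 h1]

lemma iota2_psi3 (p : ZMod 3 × ℤ) : iota2 (psi3 f) p = iota2 f p := by
  unfold iota2
  rw [h_psi3, twol_psi3, twol_psi3, twol_psi3]

lemma rho_psi3 (p : ZMod 3 × ℤ) : rho (psi3 f) p = rhoInv f p := by
  unfold rho rhoInv
  rw [Prod.mk.injEq]
  refine ⟨rfl, ?_⟩
  rw [q_psi3, twol_psi3, emod_add_emod'', show p.2 + -f.q p.1 = p.2 - f.q p.1 by ring]

lemma rhoInv_psi3 (p : ZMod 3 × ℤ) : rhoInv (psi3 f) p = rho f p := by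
  unfold rho rhoInv
  rw [Prod.mk.injEq]
  refine ⟨rfl, ?_⟩
  rw [q_psi3, twol_psi3, emod_sub_emod', show p.2 - -f.q p.1 = p.2 + f.q p.1 by ring]

lemma step_psi3 (hm : ∀ i, 0 < f.twol i) {a b : ZMod 3 × ℤ}
    (h : Step f {2,3} a b) : Step (psi3 f) {2,3} (rhoInv f a) (rhoInv f b) := by
  obtain ⟨ha, hb, c, hc, hbe⟩ := h
  simp only [Set.mem_insert_iff, Set.mem_singleton_iff] at hc
  refine ⟨vtx_psi3.2 (rhoInv_mem hm a), vtx_psi3.2 (rhoInv_mem hm b), ?_⟩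
  rcases hc with rfl | rfl
  · -- b = iota2 f a ; image edge has colour 3
    refine ⟨3, by simp, ?_⟩
    show rhoInv f b = iota3 (psi3 f) (rhoInv f a)
    rw [hbe]
    show rhoInv f (iota2 f a)
       = rho (psi3 f) (iota2 (psi3 f) (rhoInv (psi3 f) (rhoInv f a)))
    rw [rhoInv_psi3, rho_rhoInv ha, iota2_psi3, rho_psi3]
  · refine ⟨2, by simp, ?_⟩
    show rhoInv f b = iota2 (psi3 f) (rhoInv f a)
    rw [hbe]
    show rhoInv f (rho f (iota2 f (rhoInv f a))) = iota2 (psi3 f) (rhoInv f a)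
    rw [rhoInv_rho (iota2_mem hm _), iota2_psi3]

lemma step_psi3' (hm : ∀ i, 0 < f.twol i) {a b : ZMod 3 × ℤ}
    (h : Step (psi3 f) {2,3} a b) : Step f {2,3} (rho f a) (rho f b) := by
  obtain ⟨ha, hb, c, hc, hbe⟩ := h
  simp only [Set.mem_insert_iff, Set.mem_singleton_iff] at hc
  refine ⟨rho_mem hm a, rho_mem hm b, ?_⟩
  rcases hc with rfl | rfl
  · refine ⟨3, by simp, ?_⟩
    show rho f b = iota3 f (rho f a)
    rw [hbe]
    show rho f (iota2 (psi3 f) a) = rho f (iota2 f (rhoInv f (rho f a)))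
    rw [rhoInv_rho (vtx_psi3.1 ha), iota2_psi3]
  · refine ⟨2, by simp, ?_⟩
    show rho f b = iota2 f (rho f a)
    rw [hbe]
    show rho f (rho (psi3 f) (iota2 (psi3 f) (rhoInv (psi3 f) a))) = iota2 f (rho f a)
    rw [rhoInv_psi3, iota2_psi3, rho_psi3, rho_rhoInv (iota2_mem hm _)]

end Psi3
section Psi2

lemma emod_emod_sub' (a b m : ℤ) : (a % m - b) % m = (a - b) % m := by
  rw [Int.sub_emod, Int.emod_emod_of_dvd _ dvd_rfl, ← Int.sub_emod]

/-- The relabelling map for `ψ₂`. -/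
def tau (g : Tuple) : ZMod 3 × ℤ → ZMod 3 × ℤ :=
  fun p => (-p.1, (g.q p.1 - 1 - p.2) % g.twol p.1)

lemma tau_mem {g : Tuple} (hm : ∀ i, 0 < g.twol i) (p : ZMod 3 × ℤ) :
    tau g p ∈ Vtx (psi2 g) := by
  refine ⟨Int.emod_nonneg _ (hm p.1).ne', ?_⟩
  show (g.q p.1 - 1 - p.2) % g.twol p.1 < (psi2 g).twol (-p.1)
  rw [twol_psi2, neg_neg]
  exact Int.emod_lt_of_pos _ (hm p.1)

lemma tau_tau {g : Tuple} {p : ZMod 3 × ℤ} (hp : p ∈ Vtx g) :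
    tau (psi2 g) (tau g p) = p := by
  obtain ⟨h0, h1⟩ := hp
  show ((- - p.1 : ZMod 3), ((psi2 g).q (-p.1) - 1 - (g.q p.1 - 1 - p.2) % g.twol p.1)
      % (psi2 g).twol (-p.1)) = p
  rw [q_psi2, twol_psi2, neg_neg, emod_sub_emod',
    show g.q p.1 - 1 - (g.q p.1 - 1 - p.2) = p.2 by ring, Int.emod_eq_of_lt h0 h1]

lemma comm2 {g : Tuple} (hm : ∀ i, 0 < g.twol i) {p : ZMod 3 × ℤ} (hp : p ∈ Vtx g) :
    iota3 (psi2 g) (tau g p) = tau g (iota2 g p) := by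
  obtain ⟨h0, h1⟩ := hp
  set i := p.1
  set j := p.2
  set m := g.twol i with hm_def
  have hmpos : 0 < m := hm i
  -- rhoInv (psi2 g) (tau g p) = (-i, m - 1 - j)
  have step1 : rhoInv (psi2 g) (tau g p) = (-i, m - 1 - j) := by
    show ((-i : ZMod 3), ((g.q i - 1 - j) % m - (psi2 g).q (-i)) % (psi2 g).twol (-i))
        = (-i, m - 1 - j)
    rw [q_psi2, twol_psi2, neg_neg, emod_emod_sub',
      show g.q i - 1 - j - g.q i = -1 - j by ring, neg_one_sub_emod j m h0 h1]
  unfold iota3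
  rw [Function.comp_apply, Function.comp_apply, step1]
  have hhm : m = g.h (i - 1) + g.h i := by rw [hm_def]; rfl
  by_cases hcase : j < g.h i
  · -- iota2' else-branch
    have hc2 : ¬ ((-i, m - 1 - j) : ZMod 3 × ℤ).2 < (psi2 g).h (-i) := by
      rw [h_psi2, show (-1 : ZMod 3) - -i = i - 1 by ring]
      show ¬ (m - 1 - j < g.h (i-1)); omega
    rw [iota2, if_neg hc2]
    have e1 : (-i : ZMod 3) - 1 = -(i + 1) := by ring
    rw [show ((-i, m-1-j) : ZMod 3 × ℤ).1 = -i from rfl,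
        show ((-i, m-1-j) : ZMod 3 × ℤ).2 = m-1-j from rfl]
    rw [twol_psi2, neg_neg, e1, twol_psi2, neg_neg, ← hm_def,
      show m - (m - 1 - j) - 1 = j by ring]
    -- now LHS = rho (psi2 g) (-(i+1), j % g.twol (i+1))
    show ((-(i+1) : ZMod 3), (j % g.twol (i+1) + (psi2 g).q (-(i+1))) % (psi2 g).twol (-(i+1)))
        = tau g (iota2 g p)
    rw [q_psi2, twol_psi2, neg_neg, emod_emod_add']
    rw [iota2, if_pos hcase]
    show _ = ((-(i+1) : ZMod 3), (g.q (i+1) - 1 - (-j - 1) % g.twol (i+1)) % g.twol (i+1))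
    rw [emod_sub_emod', show g.q (i+1) - 1 - (-j - 1) = j + g.q (i+1) by ring]
  · have hc2 : ((-i, m - 1 - j) : ZMod 3 × ℤ).2 < (psi2 g).h (-i) := by
      rw [h_psi2, show (-1 : ZMod 3) - -i = i - 1 by ring]
      show m - 1 - j < g.h (i-1); omega
    rw [iota2, if_pos hc2]
    rw [show ((-i, m-1-j) : ZMod 3 × ℤ).1 = -i from rfl,
        show ((-i, m-1-j) : ZMod 3 × ℤ).2 = m-1-j from rfl]
    have e1 : (-i : ZMod 3) + 1 = -(i - 1) := by ring
    rw [e1, twol_psi2, neg_neg, show -(m - 1 - j) - 1 = j - m by ring]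
    show ((-(i-1) : ZMod 3), ((j - m) % g.twol (i-1) + (psi2 g).q (-(i-1))) % (psi2 g).twol (-(i-1)))
        = tau g (iota2 g p)
    rw [q_psi2, twol_psi2, neg_neg, emod_emod_add']
    rw [iota2, if_neg hcase]
    show _ = ((-(i-1) : ZMod 3), (g.q (i-1) - 1 - (m - j - 1) % g.twol (i-1)) % g.twol (i-1))
    rw [emod_sub_emod', show g.q (i-1) - 1 - (m - j - 1) = j - m + g.q (i-1) by ring]

end Psi2
section Psi2b

lemma comm3 {g : Tuple} (hm : ∀ i, 0 < g.twol i) (p : ZMod 3 × ℤ) :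
    iota2 (psi2 g) (tau g p) = tau g (iota3 g p) := by
  set i := p.1
  set j := p.2
  set m := g.twol i with hm_def
  set t := (j - g.q i) % m with ht_def
  have ht0 : 0 ≤ t := Int.emod_nonneg _ (hm i).ne'
  have ht1 : t < m := Int.emod_lt_of_pos _ (hm i)
  have hhm : m = g.h (i - 1) + g.h i := by rw [hm_def]; rfl
  -- the second coordinate of tau g p equals m - 1 - t
  have hk : (g.q i - 1 - j) % m = m - 1 - t := by
    rw [show g.q i - 1 - j = -1 - (j - g.q i) by ring, ← emod_sub_emod' (-1) (j - g.q i) m,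
      ← ht_def, neg_one_sub_emod t m ht0 ht1]
  have hstep0 : rhoInv g p = (i, t) := rfl
  have htau : tau g p = (-i, m - 1 - t) := by
    show (-i, (g.q i - 1 - j) % m) = (-i, m - 1 - t)
    rw [hk]
  rw [htau]
  unfold iota3
  rw [Function.comp_apply, Function.comp_apply, hstep0]
  by_cases hcase : t < g.h i
  · -- iota2 (psi2 g) else-branch
    have hc2 : ¬ ((-i, m - 1 - t) : ZMod 3 × ℤ).2 < (psi2 g).h (-i) := by
      rw [h_psi2, show (-1 : ZMod 3) - -i = i - 1 by ring]
      show ¬ (m - 1 - t < g.h (i-1)); omega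
    rw [iota2, if_neg hc2]
    rw [show ((-i, m-1-t) : ZMod 3 × ℤ).1 = -i from rfl,
        show ((-i, m-1-t) : ZMod 3 × ℤ).2 = m-1-t from rfl]
    have e1 : (-i : ZMod 3) - 1 = -(i + 1) := by ring
    rw [twol_psi2, neg_neg, ← hm_def, e1, twol_psi2, neg_neg,
      show m - (m - 1 - t) - 1 = t by ring]
    -- RHS
    rw [show iota2 g (i, t) = (i + 1, (-t - 1) % g.twol (i+1)) from by
      rw [iota2, if_pos hcase]]
    show (-(i+1), t % g.twol (i+1))
        = tau g (i + 1, ((-t - 1) % g.twol (i+1) + g.q (i+1)) % g.twol (i+1))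
    show (-(i+1), t % g.twol (i+1))
        = (-(i+1), (g.q (i+1) - 1 - ((-t - 1) % g.twol (i+1) + g.q (i+1)) % g.twol (i+1))
            % g.twol (i+1))
    rw [emod_sub_emod',
      show g.q (i+1) - 1 - ((-t - 1) % g.twol (i+1) + g.q (i+1))
        = -1 - (-t - 1) % g.twol (i+1) by ring,
      emod_sub_emod', show (-1 : ℤ) - (-t - 1) = t by ring]
  · have hc2 : ((-i, m - 1 - t) : ZMod 3 × ℤ).2 < (psi2 g).h (-i) := by
      rw [h_psi2, show (-1 : ZMod 3) - -i = i - 1 by ring]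
      show m - 1 - t < g.h (i-1); omega
    rw [iota2, if_pos hc2]
    rw [show ((-i, m-1-t) : ZMod 3 × ℤ).1 = -i from rfl,
        show ((-i, m-1-t) : ZMod 3 × ℤ).2 = m-1-t from rfl]
    have e1 : (-i : ZMod 3) + 1 = -(i - 1) := by ring
    rw [e1, twol_psi2, neg_neg, show -(m - 1 - t) - 1 = t - m by ring]
    rw [show iota2 g (i, t) = (i - 1, (g.twol i - t - 1) % g.twol (i-1)) from by
      rw [iota2, if_neg hcase]]
    show ((-(i-1) : ZMod 3), (t - m) % g.twol (i-1))
        = (-(i-1), (g.q (i-1) - 1 - ((g.twol i - t - 1) % g.twol (i-1) + g.q (i-1)) % g.twol (i-1))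
            % g.twol (i-1))
    rw [emod_sub_emod',
      show g.q (i-1) - 1 - ((g.twol i - t - 1) % g.twol (i-1) + g.q (i-1))
        = -1 - (g.twol i - t - 1) % g.twol (i-1) by ring,
      emod_sub_emod', ← hm_def, show (-1 : ℤ) - (m - t - 1) = t - m by ring]

lemma step_psi2 {g : Tuple} (hm : ∀ i, 0 < g.twol i) {a b : ZMod 3 × ℤ}
    (h : Step g {2,3} a b) : Step (psi2 g) {2,3} (tau g a) (tau g b) := by
  obtain ⟨ha, hb, c, hc, hbe⟩ := h
  simp only [Set.mem_insert_iff, Set.mem_singleton_iff] at hc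
  refine ⟨tau_mem hm a, tau_mem hm b, ?_⟩
  rcases hc with rfl | rfl
  · exact ⟨3, by simp, by rw [hbe]; exact (comm2 hm ha).symm⟩
  · exact ⟨2, by simp, by rw [hbe]; exact (comm3 hm a).symm⟩

end Psi2b
section Final

lemma twol_pos {f : Tuple} (h : CondI f) (i : ZMod 3) : 0 < f.twol i := by
  have a := h (i - 1); have b := h i
  show 0 < f.h (i - 1) + f.h i
  omega

lemma admissible_psi1 {f : Tuple} (hf : Admissible f) : Admissible (psi1 f) := by
  obtain ⟨⟨hI, hII, hIII, hIV⟩, hV, hVI⟩ := hf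
  refine ⟨⟨?_, ?_, ?_, ?_⟩, ?_, ?_⟩
  · intro i; rw [h_psi1]; exact hI _
  · intro i j; rw [h_psi1, h_psi1]; exact hII _ _
  · intro i; rw [q_psi1, twol_psi1]; exact hIII _
  · intro i j; rw [q_psi1, q_psi1]; exact hIV _ _
  · intro i; rw [h_psi1, q_psi1]; exact hV _
  · -- ThreeOrbits
    have hm := twol_pos hI
    have e3 : ∀ v : ZMod 3 × ℤ, sh (sh (sh v)) = v := by
      intro v
      show ((v.1 - 1 - 1 - 1 : ZMod 3), v.2) = v
      rw [show v.1 - 1 - 1 - 1 = v.1 from by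
        have : ∀ x : ZMod 3, x - 1 - 1 - 1 = x := by decide
        exact this v.1]
    refine threeOrbits_transfer sh (fun p => sh (sh p)) (fun v hv => sh_vtx hv)
      (fun v hv => ?_) (fun v hv => ?_) (fun v hv => ?_) (fun a b h => step_psi1 f h)
      (fun a b h => ?_) hVI
    · exact (sh_vtx (sh_vtx hv) : sh (sh v) ∈ Vtx (psi1 (psi1 (psi1 f))))
    · exact e3 v
    · exact e3 v
    · exact (step_psi1 _ (step_psi1 _ h) :
        Step (psi1 (psi1 (psi1 f))) {2,3} (sh (sh a)) (sh (sh b)))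

lemma admissible_psi2 {f : Tuple} (hf : Admissible f) : Admissible (psi2 f) := by
  obtain ⟨⟨hI, hII, hIII, hIV⟩, hV, hVI⟩ := hf
  have hm := twol_pos hI
  have hm2 : ∀ i, 0 < (psi2 f).twol i := by intro i; rw [twol_psi2]; exact hm _
  refine ⟨⟨?_, ?_, ?_, ?_⟩, ?_, ?_⟩
  · intro i; rw [h_psi2]; exact hI _
  · intro i j; rw [h_psi2, h_psi2]; exact hII _ _
  · intro i; rw [q_psi2, twol_psi2]; exact hIII _
  · intro i j; rw [q_psi2, q_psi2]; exact hIV _ _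
  · intro i
    rw [h_psi2, q_psi2]
    have a := hII (-1 - i) (-i); have b := hV (-i)
    omega
  · refine threeOrbits_transfer (tau f) (tau (psi2 f)) (fun v hv => tau_mem hm v)
      (fun v hv => (tau_mem hm2 v : tau (psi2 f) v ∈ Vtx (psi2 (psi2 f))))
      (fun v hv => tau_tau hv)
      (fun v hv => (tau_tau hv : tau (psi2 (psi2 f)) (tau (psi2 f) v) = v))
      (fun a b h => step_psi2 hm h)
      (fun a b h => (step_psi2 hm2 h :
        Step (psi2 (psi2 f)) {2,3} (tau (psi2 f) a) (tau (psi2 f) b))) hVI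

lemma admissible_psi3 {f : Tuple} (hf : Admissible f) : Admissible (psi3 f) := by
  obtain ⟨⟨hI, hII, hIII, hIV⟩, hV, hVI⟩ := hf
  have hm := twol_pos hI
  have hdvd : ∀ i, (2 : ℤ) ∣ f.twol i := by
    intro i
    have a := hII (i - 1) i
    have e : f.twol i = f.h (i - 1) + f.h i := rfl
    omega
  refine ⟨⟨?_, ?_, ?_, ?_⟩, ?_, ?_⟩
  · intro i; rw [h_psi3]; exact hI _
  · intro i j; rw [h_psi3, h_psi3]; exact hII _ _
  · intro i
    rw [q_psi3, twol_psi3]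
    exact ⟨Int.emod_nonneg _ (hm i).ne', Int.emod_lt_of_pos _ (hm i)⟩
  · intro i j
    rw [q_psi3, q_psi3]
    have a := Int.emod_emod_of_dvd (-f.q i) (hdvd i)
    have b := Int.emod_emod_of_dvd (-f.q j) (hdvd j)
    have c := hIV i j
    omega
  · intro i
    rw [h_psi3, q_psi3]
    have a := Int.emod_emod_of_dvd (-f.q i) (hdvd i)
    have b := hV i
    omega
  · refine threeOrbits_transfer (rhoInv f) (rho f)
      (fun v hv => vtx_psi3.2 (rhoInv_mem hm v))
      (fun v hv => rho_mem hm v)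
      (fun v hv => rho_rhoInv hv)
      (fun v hv => rhoInv_rho (vtx_psi3.1 hv))
      (fun a b h => step_psi3 hm h)
      (fun a b h => step_psi3' hm h) hVI

end Final
/-- `ψ₁`, `ψ₂`, `ψ₃` preserve admissibility. -/
theorem stmt_4 (f : Tuple) (hf : Admissible f) :
    Admissible (psi1 f) ∧ Admissible (psi2 f) ∧ Admissible (psi3 f) := by
  exact ⟨admissible_psi1 hf, admissible_psi2 hf, admissible_psi3 hf⟩

end GMN
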